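/- arXiv:math/0106158 — 2 statements merged into one kernel-verified Lean document; each statement's English description precedes it below -/
import Mathlib

section
/- For a simplicial object X in simplicial sets (i.e., a bisimplicial set), the natural map sk_n(Re_n X) → sk_n(Re X) from the n-skeleton of the n-truncated realization to the n-skeleton of the realization is an isomorphism of simplicial sets. -/
open CategoryTheory CategoryTheory.Limits Simplicial Opposite

namespace RealizationAux

abbrev RIdx : Type := Σ p : SimplexCategory × SimplexCategory, (p.1 ⟶ p.2)

noncomputable def A (X : CategoryTheory.SimplicialObject SSet.{0}) : SSet.{0} :=
  ∐ fun s : RIdx => X.obj (op s.1.2) ⨯ SSet.stdSimplex.obj s.1.1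

noncomputable def B (X : CategoryTheory.SimplicialObject SSet.{0}) : SSet.{0} :=
  ∐ fun k : SimplexCategory => X.obj (op k) ⨯ SSet.stdSimplex.obj k

noncomputable def alpha (X : CategoryTheory.SimplicialObject SSet.{0}) : A X ⟶ B X :=
  Sigma.desc fun s => prod.map (𝟙 _) (SSet.stdSimplex.map s.2) ≫
    Sigma.ι (fun k : SimplexCategory => X.obj (op k) ⨯ SSet.stdSimplex.obj k) s.1.2

noncomputable def beta (X : CategoryTheory.SimplicialObject SSet.{0}) : A X ⟶ B X :=
  Sigma.desc fun s => prod.map (X.map s.2.op) (𝟙 _) ≫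
    Sigma.ι (fun k : SimplexCategory => X.obj (op k) ⨯ SSet.stdSimplex.obj k) s.1.1

noncomputable def Re (X : CategoryTheory.SimplicialObject SSet.{0}) : SSet.{0} :=
  coequalizer (alpha X) (beta X)

/-- Truncated index type: morphisms `φ : [m] ⟶ [k]` with `m, k ≤ n`. -/
abbrev RIdxT (n : ℕ) : Type := {s : RIdx // s.1.1.len ≤ n ∧ s.1.2.len ≤ n}

/-- Truncated object index type. -/
abbrev ObjT (n : ℕ) : Type := {k : SimplexCategory // k.len ≤ n}

noncomputable def An (n : ℕ) (X : CategoryTheory.SimplicialObject SSet.{0}) : SSet.{0} :=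
  ∐ fun s : RIdxT n => X.obj (op s.1.1.2) ⨯ SSet.stdSimplex.obj s.1.1.1

noncomputable def Bn (n : ℕ) (X : CategoryTheory.SimplicialObject SSet.{0}) : SSet.{0} :=
  ∐ fun k : ObjT n => X.obj (op k.1) ⨯ SSet.stdSimplex.obj k.1

noncomputable def alphan (n : ℕ) (X : CategoryTheory.SimplicialObject SSet.{0}) :
    An n X ⟶ Bn n X :=
  Sigma.desc fun s => prod.map (𝟙 _) (SSet.stdSimplex.map s.1.2) ≫
    Sigma.ι (fun k : ObjT n => X.obj (op k.1) ⨯ SSet.stdSimplex.obj k.1)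
      ⟨s.1.1.2, s.2.2⟩

noncomputable def betan (n : ℕ) (X : CategoryTheory.SimplicialObject SSet.{0}) :
    An n X ⟶ Bn n X :=
  Sigma.desc fun s => prod.map (X.map s.1.2.op) (𝟙 _) ≫
    Sigma.ι (fun k : ObjT n => X.obj (op k.1) ⨯ SSet.stdSimplex.obj k.1)
      ⟨s.1.1.1, s.2.1⟩

/-- The `n`-truncated realization of a bisimplicial set. -/
noncomputable def ReT (n : ℕ) (X : CategoryTheory.SimplicialObject SSet.{0}) : SSet.{0} :=
  coequalizer (alphan n X) (betan n X)

/-- The natural comparison map `Re_n X ⟶ Re X`, induced by the inclusion of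
coproducts. -/
noncomputable def reTToRe (n : ℕ) (X : CategoryTheory.SimplicialObject SSet.{0}) :
    ReT n X ⟶ Re X :=
  coequalizer.desc
    ((Sigma.desc fun k : ObjT n =>
        Sigma.ι (fun k : SimplexCategory => X.obj (op k) ⨯ SSet.stdSimplex.obj k) k.1) ≫
      coequalizer.π (alpha X) (beta X))
    (by
      apply Sigma.hom_ext
      intro s
      have h := Sigma.ι (fun s : RIdx =>
          X.obj (op s.1.2) ⨯ SSet.stdSimplex.obj s.1.1) s.1 ≫=
        coequalizer.condition (alpha X) (beta X)
      simp only [alphan, betan, alpha, beta] at h ⊢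
      erw [colimit.ι_desc_assoc, colimit.ι_desc_assoc] at h
      erw [colimit.ι_desc_assoc, colimit.ι_desc_assoc, Category.assoc, Category.assoc, colimit.ι_desc_assoc, colimit.ι_desc_assoc]
      exact h)

section LevelwiseHelpers

lemma capp {F G H : SSet.{0}} (f : F ⟶ G) (g : G ⟶ H) (m : SimplexCategoryᵒᵖ)
    (x : F.obj m) : (f ≫ g).app m x = g.app m (f.app m x) := rfl

noncomputable def pairEquiv (F G : SSet.{0}) (m : SimplexCategoryᵒᵖ) :
    (F ⨯ G).obj m ≃ F.obj m × G.obj m :=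
  ((PreservesLimitPair.iso ((evaluation SimplexCategoryᵒᵖ (Type 0)).obj m) F G).trans
    (Types.binaryProductIso (F.obj m) (G.obj m))).toEquiv

lemma fst_pairEquiv_symm (F G : SSet.{0}) (m : SimplexCategoryᵒᵖ) (z : F.obj m × G.obj m) :
    (prod.fst : F ⨯ G ⟶ F).app m ((pairEquiv F G m).symm z) = z.1 := by
  have h1 := types_congr_hom (PreservesLimitPair.iso_inv_fst
    ((evaluation SimplexCategoryᵒᵖ (Type 0)).obj m) F G)
    ((Types.binaryProductIso (F.obj m) (G.obj m)).inv z)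
  have h2 := types_congr_hom (Types.binaryProductIso_inv_comp_fst (F.obj m) (G.obj m)) z
  simp only [types_comp_apply, evaluation_obj_map] at h1 h2
  simp only [pairEquiv, Iso.toEquiv, Iso.trans_inv, types_comp_apply, Equiv.coe_fn_symm_mk]
  exact h1.trans h2

lemma snd_pairEquiv_symm (F G : SSet.{0}) (m : SimplexCategoryᵒᵖ) (z : F.obj m × G.obj m) :
    (prod.snd : F ⨯ G ⟶ G).app m ((pairEquiv F G m).symm z) = z.2 := by
  have h1 := types_congr_hom (PreservesLimitPair.iso_inv_snd
    ((evaluation SimplexCategoryᵒᵖ (Type 0)).obj m) F G)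
    ((Types.binaryProductIso (F.obj m) (G.obj m)).inv z)
  have h2 := types_congr_hom (Types.binaryProductIso_inv_comp_snd (F.obj m) (G.obj m)) z
  simp only [types_comp_apply, evaluation_obj_map] at h1 h2
  simp only [pairEquiv, Iso.toEquiv, Iso.trans_inv, types_comp_apply, Equiv.coe_fn_symm_mk]
  exact h1.trans h2

lemma pairEquiv_fst (F G : SSet.{0}) (m : SimplexCategoryᵒᵖ) (c : (F ⨯ G).obj m) :
    ((pairEquiv F G m) c).1 = (prod.fst : F ⨯ G ⟶ F).app m c := by
  conv_rhs => rw [← (pairEquiv F G m).symm_apply_apply c]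
  rw [fst_pairEquiv_symm]

lemma pairEquiv_snd (F G : SSet.{0}) (m : SimplexCategoryᵒᵖ) (c : (F ⨯ G).obj m) :
    ((pairEquiv F G m) c).2 = (prod.snd : F ⨯ G ⟶ G).app m c := by
  conv_rhs => rw [← (pairEquiv F G m).symm_apply_apply c]
  rw [snd_pairEquiv_symm]

lemma pair_ext {F G : SSet.{0}} {m : SimplexCategoryᵒᵖ} {c c' : (F ⨯ G).obj m}
    (h1 : (prod.fst : F ⨯ G ⟶ F).app m c = (prod.fst : F ⨯ G ⟶ F).app m c')
    (h2 : (prod.snd : F ⨯ G ⟶ G).app m c = (prod.snd : F ⨯ G ⟶ G).app m c') : c = c' := by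
  apply (pairEquiv F G m).injective
  exact Prod.ext (by rw [pairEquiv_fst, pairEquiv_fst]; exact h1)
    (by rw [pairEquiv_snd, pairEquiv_snd]; exact h2)

lemma map_fst_app {F G F' G' : SSet.{0}} (u : F ⟶ F') (v : G ⟶ G') (m : SimplexCategoryᵒᵖ)
    (c : (F ⨯ G).obj m) :
    (prod.fst : F' ⨯ G' ⟶ F').app m ((prod.map u v).app m c) =
      u.app m ((prod.fst : F ⨯ G ⟶ F).app m c) := by
  have := types_congr_hom (NatTrans.congr_app (prod.map_fst u v) m) c
  simpa only [NatTrans.comp_app, types_comp_apply] using this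

lemma map_snd_app {F G F' G' : SSet.{0}} (u : F ⟶ F') (v : G ⟶ G') (m : SimplexCategoryᵒᵖ)
    (c : (F ⨯ G).obj m) :
    (prod.snd : F' ⨯ G' ⟶ G').app m ((prod.map u v).app m c) =
      v.app m ((prod.snd : F ⨯ G ⟶ G).app m c) := by
  have := types_congr_hom (NatTrans.congr_app (prod.map_snd u v) m) c
  simpa only [NatTrans.comp_app, types_comp_apply] using this

lemma ss_map_app {k k' : SimplexCategory} (g : k ⟶ k') (m : SimplexCategoryᵒᵖ)
    (z : (SSet.stdSimplex.{0}.obj k).obj m) :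
    (SSet.stdSimplex.map g).app m z = ULift.up (z.down ≫ g) := rfl

end LevelwiseHelpers

section Untruncated

variable (X : CategoryTheory.SimplicialObject SSet.{0}) (m : SimplexCategory)

/-- The coproduct family defining `B X`. -/
noncomputable abbrev famB : SimplexCategory → SSet.{0} :=
  fun k => X.obj (op k) ⨯ SSet.stdSimplex.obj k

/-- The coproduct family defining `A X`. -/
noncomputable abbrev famA : RIdx → SSet.{0} :=
  fun s => X.obj (op s.1.2) ⨯ SSet.stdSimplex.obj s.1.1

/-- The "diagonal value" of an `m`-simplex of a component of `B X`. -/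
noncomputable def funB (k : SimplexCategory) (c : (famB X k).obj (op m)) :
    (X.obj (op m)).obj (op m) :=
  (X.map ((prod.snd : famB X k ⟶ SSet.stdSimplex.obj k).app (op m) c).down.op).app (op m)
    ((prod.fst : famB X k ⟶ X.obj (op k)).app (op m) c)

noncomputable def hB :
    IsColimit (((evaluation SimplexCategoryᵒᵖ (Type 0)).obj (op m)).mapCocone
      (colimit.cocone (Discrete.functor (famB X)))) :=
  isColimitOfPreserves _ (colimit.isColimit _)

noncomputable def hA :
    IsColimit (((evaluation SimplexCategoryᵒᵖ (Type 0)).obj (op m)).mapCocone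
      (colimit.cocone (Discrete.functor (famA X)))) :=
  isColimitOfPreserves _ (colimit.isColimit _)

noncomputable def rB : (B X).obj (op m) → (X.obj (op m)).obj (op m) :=
  (hB X m).desc
    { pt := (X.obj (op m)).obj (op m)
      ι := Discrete.natTrans (fun k => ↾(funB X m k.as)) }

lemma rB_ι (k : SimplexCategory) (c : (famB X k).obj (op m)) :
    rB X m ((Sigma.ι (famB X) k).app (op m) c) = funB X m k c :=
  types_congr_hom ((hB X m).fac _ ⟨k⟩) c

lemma B_surj (b : (B X).obj (op m)) :
    ∃ (k : SimplexCategory) (c : (famB X k).obj (op m)),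
      (Sigma.ι (famB X) k).app (op m) c = b := by
  obtain ⟨j, y, h⟩ := Types.jointly_surjective _ (hB X m) b
  exact ⟨j.as, y, h⟩

lemma A_surj (a : (A X).obj (op m)) :
    ∃ (s : RIdx) (c : (famA X s).obj (op m)),
      (Sigma.ι (famA X) s).app (op m) c = a := by
  obtain ⟨j, y, h⟩ := Types.jointly_surjective _ (hA X m) a
  exact ⟨j.as, y, h⟩

lemma alpha_app_ι (s : RIdx) (c : (famA X s).obj (op m)) :
    (alpha X).app (op m) ((Sigma.ι (famA X) s).app (op m) c) =
      (Sigma.ι (famB X) s.1.2).app (op m)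
        ((prod.map (𝟙 (X.obj (op s.1.2))) (SSet.stdSimplex.map s.2)).app (op m) c) := by
  have h0 : Sigma.ι (famA X) s ≫ alpha X =
      prod.map (𝟙 (X.obj (op s.1.2))) (SSet.stdSimplex.map s.2) ≫
        Sigma.ι (famB X) s.1.2 := by
    simp [alpha]
    rfl
  have := types_congr_hom (NatTrans.congr_app h0 (op m)) c
  exact this

lemma beta_app_ι (s : RIdx) (c : (famA X s).obj (op m)) :
    (beta X).app (op m) ((Sigma.ι (famA X) s).app (op m) c) =
      (Sigma.ι (famB X) s.1.1).app (op m)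
        ((prod.map (X.map s.2.op) (𝟙 (SSet.stdSimplex.obj s.1.1))).app (op m) c) := by
  have h0 : Sigma.ι (famA X) s ≫ beta X =
      prod.map (X.map s.2.op) (𝟙 (SSet.stdSimplex.obj s.1.1)) ≫
        Sigma.ι (famB X) s.1.1 := by
    simp [beta]
    rfl
  have := types_congr_hom (NatTrans.congr_app h0 (op m)) c
  exact this

lemma rB_alpha_eq_rB_beta (a : (A X).obj (op m)) :
    rB X m ((alpha X).app (op m) a) = rB X m ((beta X).app (op m) a) := by
  obtain ⟨s, c, rfl⟩ := A_surj X m a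
  rw [alpha_app_ι, beta_app_ι, rB_ι, rB_ι]
  unfold funB
  rw [map_fst_app, map_snd_app, map_fst_app, map_snd_app, ss_map_app]
  rw [op_comp, X.map_comp, capp]
  rfl

noncomputable def hRe :
    IsColimit (((evaluation SimplexCategoryᵒᵖ (Type 0)).obj (op m)).mapCocone
      (colimit.cocone (parallelPair (alpha X) (beta X)))) :=
  isColimitOfPreserves _ (colimit.isColimit _)

noncomputable def coconeRe :
    Cocone (parallelPair (alpha X) (beta X) ⋙
      (evaluation SimplexCategoryᵒᵖ (Type 0)).obj (op m)) where
  pt := (X.obj (op m)).obj (op m)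
  ι :=
    { app := fun j => match j with
        | .zero => ↾(fun a => rB X m ((alpha X).app (op m) a))
        | .one => ↾(rB X m)
      naturality := by
        intro j j' f
        change WalkingParallelPairHom j j' at f
        cases f with
        | left => ext a; rfl
        | right => ext a; exact (rB_alpha_eq_rB_beta X m a).symm
        | id => cases j with
          | zero => ext a; rfl
          | one => ext a; rfl }

noncomputable def rRe : (Re X).obj (op m) → (X.obj (op m)).obj (op m) :=
  (hRe X m).desc (coconeRe X m)

lemma rRe_π (b : (B X).obj (op m)) :
    rRe X m ((coequalizer.π (alpha X) (beta X)).app (op m) b) = rB X m b :=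
  types_congr_hom ((hRe X m).fac (coconeRe X m) WalkingParallelPair.one) b

lemma π_surj (e : (Re X).obj (op m)) :
    ∃ b, (coequalizer.π (alpha X) (beta X)).app (op m) b = e := by
  obtain ⟨j, y, h⟩ := Types.jointly_surjective _ (hRe X m) e
  cases j with
  | one => exact ⟨y, h⟩
  | zero =>
    refine ⟨(alpha X).app (op m) y, ?_⟩
    rw [← h]
    have hw := (colimit.cocone (parallelPair (alpha X) (beta X))).w WalkingParallelPairHom.left
    have := types_congr_hom (NatTrans.congr_app hw (op m)) y
    exact this

/-- Section of `rRe`. -/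
noncomputable def sigmaR (d : (X.obj (op m)).obj (op m)) : (Re X).obj (op m) :=
  (coequalizer.π (alpha X) (beta X)).app (op m) ((Sigma.ι (famB X) m).app (op m)
    ((pairEquiv (X.obj (op m)) (SSet.stdSimplex.obj m) (op m)).symm (d, ULift.up (𝟙 m))))

lemma rRe_sigmaR (d : (X.obj (op m)).obj (op m)) : rRe X m (sigmaR X m d) = d := by
  unfold sigmaR
  erw [rRe_π, rB_ι]
  unfold funB
  rw [fst_pairEquiv_symm, snd_pairEquiv_symm]
  show (X.map (𝟙 (op m))).app (op m) d = d
  rw [X.map_id]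
  rfl

lemma key (k : SimplexCategory) (c : (famB X k).obj (op m)) :
    (coequalizer.π (alpha X) (beta X)).app (op m) ((Sigma.ι (famB X) k).app (op m) c) =
      sigmaR X m (funB X m k c) := by
  set x := (prod.fst : famB X k ⟶ X.obj (op k)).app (op m) c with hx
  set g := ((prod.snd : famB X k ⟶ SSet.stdSimplex.obj k).app (op m) c).down with hg
  set e0 := (pairEquiv (X.obj (op k)) (SSet.stdSimplex.obj m) (op m)).symm
    (x, ULift.up (𝟙 m)) with he0
  have hmapα : (prod.map (𝟙 (X.obj (op k))) (SSet.stdSimplex.map g)).app (op m) e0 = c := by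
    apply pair_ext
    · rw [map_fst_app, he0, fst_pairEquiv_symm]
      rfl
    · rw [map_snd_app, he0, snd_pairEquiv_symm, ss_map_app]
      simp only [Category.id_comp]
      rfl
  have hmapβ : (prod.map (X.map g.op) (𝟙 (SSet.stdSimplex.obj m))).app (op m) e0 =
      (pairEquiv (X.obj (op m)) (SSet.stdSimplex.obj m) (op m)).symm
        ((X.map g.op).app (op m) x, ULift.up (𝟙 m)) := by
    apply pair_ext
    · rw [map_fst_app, he0, fst_pairEquiv_symm, fst_pairEquiv_symm]
    · rw [map_snd_app, he0, snd_pairEquiv_symm, snd_pairEquiv_symm]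
      rfl
  have hcond := types_congr_hom (NatTrans.congr_app (coequalizer.condition (alpha X) (beta X)) (op m))
    ((Sigma.ι (famA X) ⟨(m, k), g⟩).app (op m) e0)
  simp only [capp] at hcond
  erw [capp, alpha_app_ι, capp (beta X), beta_app_ι] at hcond
  dsimp only at hcond
  rw [hmapα, hmapβ] at hcond
  exact hcond.trans rfl

lemma sigmaR_rRe (e : (Re X).obj (op m)) : sigmaR X m (rRe X m e) = e := by
  obtain ⟨b, rfl⟩ := π_surj X m e
  obtain ⟨k, c, rfl⟩ := B_surj X m b
  erw [rRe_π, rB_ι, ← key]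

end Untruncated

section Truncated

variable (n : ℕ) (X : CategoryTheory.SimplicialObject SSet.{0}) (m : SimplexCategory)

/-- The coproduct family defining `Bn n X`. -/
noncomputable abbrev famBT : ObjT n → SSet.{0} :=
  fun k => X.obj (op k.1) ⨯ SSet.stdSimplex.obj k.1

/-- The coproduct family defining `An n X`. -/
noncomputable abbrev famAT : RIdxT n → SSet.{0} :=
  fun s => X.obj (op s.1.1.2) ⨯ SSet.stdSimplex.obj s.1.1.1

noncomputable def hBT :
    IsColimit (((evaluation SimplexCategoryᵒᵖ (Type 0)).obj (op m)).mapCocone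
      (colimit.cocone (Discrete.functor (famBT n X)))) :=
  isColimitOfPreserves _ (colimit.isColimit _)

noncomputable def hAT :
    IsColimit (((evaluation SimplexCategoryᵒᵖ (Type 0)).obj (op m)).mapCocone
      (colimit.cocone (Discrete.functor (famAT n X)))) :=
  isColimitOfPreserves _ (colimit.isColimit _)

noncomputable def rBT : (Bn n X).obj (op m) → (X.obj (op m)).obj (op m) :=
  (hBT n X m).desc
    { pt := (X.obj (op m)).obj (op m)
      ι := Discrete.natTrans (fun k => ↾(funB X m k.as.1)) }

lemma rBT_ι (k : ObjT n) (c : (famBT n X k).obj (op m)) :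
    rBT n X m ((Sigma.ι (famBT n X) k).app (op m) c) = funB X m k.1 c :=
  types_congr_hom ((hBT n X m).fac _ ⟨k⟩) c

lemma BT_surj (b : (Bn n X).obj (op m)) :
    ∃ (k : ObjT n) (c : (famBT n X k).obj (op m)),
      (Sigma.ι (famBT n X) k).app (op m) c = b := by
  obtain ⟨j, y, h⟩ := Types.jointly_surjective _ (hBT n X m) b
  exact ⟨j.as, y, h⟩

lemma AT_surj (a : (An n X).obj (op m)) :
    ∃ (s : RIdxT n) (c : (famAT n X s).obj (op m)),
      (Sigma.ι (famAT n X) s).app (op m) c = a := by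
  obtain ⟨j, y, h⟩ := Types.jointly_surjective _ (hAT n X m) a
  exact ⟨j.as, y, h⟩

lemma alphan_app_ι (s : RIdxT n) (c : (famAT n X s).obj (op m)) :
    (alphan n X).app (op m) ((Sigma.ι (famAT n X) s).app (op m) c) =
      (Sigma.ι (famBT n X) ⟨s.1.1.2, s.2.2⟩).app (op m)
        ((prod.map (𝟙 (X.obj (op s.1.1.2))) (SSet.stdSimplex.map s.1.2)).app (op m) c) := by
  have h0 : Sigma.ι (famAT n X) s ≫ alphan n X =
      prod.map (𝟙 (X.obj (op s.1.1.2))) (SSet.stdSimplex.map s.1.2) ≫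
        Sigma.ι (famBT n X) ⟨s.1.1.2, s.2.2⟩ := by
    simp [alphan]
    rfl
  have := types_congr_hom (NatTrans.congr_app h0 (op m)) c
  exact this

lemma betan_app_ι (s : RIdxT n) (c : (famAT n X s).obj (op m)) :
    (betan n X).app (op m) ((Sigma.ι (famAT n X) s).app (op m) c) =
      (Sigma.ι (famBT n X) ⟨s.1.1.1, s.2.1⟩).app (op m)
        ((prod.map (X.map s.1.2.op) (𝟙 (SSet.stdSimplex.obj s.1.1.1))).app (op m) c) := by
  have h0 : Sigma.ι (famAT n X) s ≫ betan n X =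
      prod.map (X.map s.1.2.op) (𝟙 (SSet.stdSimplex.obj s.1.1.1)) ≫
        Sigma.ι (famBT n X) ⟨s.1.1.1, s.2.1⟩ := by
    simp [betan]
    rfl
  have := types_congr_hom (NatTrans.congr_app h0 (op m)) c
  exact this

lemma rBT_alphan_eq_rBT_betan (a : (An n X).obj (op m)) :
    rBT n X m ((alphan n X).app (op m) a) = rBT n X m ((betan n X).app (op m) a) := by
  obtain ⟨s, c, rfl⟩ := AT_surj n X m a
  rw [alphan_app_ι, betan_app_ι, rBT_ι, rBT_ι]
  unfold funB
  rw [map_fst_app, map_snd_app, map_fst_app, map_snd_app, ss_map_app]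
  rw [op_comp, X.map_comp, capp]
  rfl

noncomputable def hReT :
    IsColimit (((evaluation SimplexCategoryᵒᵖ (Type 0)).obj (op m)).mapCocone
      (colimit.cocone (parallelPair (alphan n X) (betan n X)))) :=
  isColimitOfPreserves _ (colimit.isColimit _)

noncomputable def coconeReT :
    Cocone (parallelPair (alphan n X) (betan n X) ⋙
      (evaluation SimplexCategoryᵒᵖ (Type 0)).obj (op m)) where
  pt := (X.obj (op m)).obj (op m)
  ι :=
    { app := fun j => match j with
        | .zero => ↾(fun a => rBT n X m ((alphan n X).app (op m) a))
        | .one => ↾(rBT n X m)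
      naturality := by
        intro j j' f
        change WalkingParallelPairHom j j' at f
        cases f with
        | left => ext a; rfl
        | right => ext a; exact (rBT_alphan_eq_rBT_betan n X m a).symm
        | id => cases j with
          | zero => ext a; rfl
          | one => ext a; rfl }

noncomputable def rReT : (ReT n X).obj (op m) → (X.obj (op m)).obj (op m) :=
  (hReT n X m).desc (coconeReT n X m)

lemma rReT_π (b : (Bn n X).obj (op m)) :
    rReT n X m ((coequalizer.π (alphan n X) (betan n X)).app (op m) b) = rBT n X m b :=
  types_congr_hom ((hReT n X m).fac (coconeReT n X m) WalkingParallelPair.one) b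

lemma πT_surj (e : (ReT n X).obj (op m)) :
    ∃ b, (coequalizer.π (alphan n X) (betan n X)).app (op m) b = e := by
  obtain ⟨j, y, h⟩ := Types.jointly_surjective _ (hReT n X m) e
  cases j with
  | one => exact ⟨y, h⟩
  | zero =>
    refine ⟨(alphan n X).app (op m) y, ?_⟩
    rw [← h]
    have hw := (colimit.cocone (parallelPair (alphan n X) (betan n X))).w
      WalkingParallelPairHom.left
    have := types_congr_hom (NatTrans.congr_app hw (op m)) y
    exact this

/-- Section of `rReT`. -/
noncomputable def sigmaT (hm : m.len ≤ n) (d : (X.obj (op m)).obj (op m)) :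
    (ReT n X).obj (op m) :=
  (coequalizer.π (alphan n X) (betan n X)).app (op m)
    ((Sigma.ι (famBT n X) ⟨m, hm⟩).app (op m)
      ((pairEquiv (X.obj (op m)) (SSet.stdSimplex.obj m) (op m)).symm
        (d, ULift.up (𝟙 m))))

lemma keyT (hm : m.len ≤ n) (k : ObjT n) (c : (famBT n X k).obj (op m)) :
    (coequalizer.π (alphan n X) (betan n X)).app (op m)
        ((Sigma.ι (famBT n X) k).app (op m) c) =
      sigmaT n X m hm (funB X m k.1 c) := by
  set x := (prod.fst : famBT n X k ⟶ X.obj (op k.1)).app (op m) c with hx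
  set g := ((prod.snd : famBT n X k ⟶ SSet.stdSimplex.obj k.1).app (op m) c).down with hg
  set e0 := (pairEquiv (X.obj (op k.1)) (SSet.stdSimplex.obj m) (op m)).symm
    (x, ULift.up (𝟙 m)) with he0
  have hmapα : (prod.map (𝟙 (X.obj (op k.1))) (SSet.stdSimplex.map g)).app (op m) e0
      = c := by
    apply pair_ext
    · rw [map_fst_app, he0, fst_pairEquiv_symm]
      rfl
    · rw [map_snd_app, he0, snd_pairEquiv_symm, ss_map_app]
      simp only [Category.id_comp]
      rfl
  have hmapβ : (prod.map (X.map g.op) (𝟙 (SSet.stdSimplex.obj m))).app (op m) e0 =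
      (pairEquiv (X.obj (op m)) (SSet.stdSimplex.obj m) (op m)).symm
        ((X.map g.op).app (op m) x, ULift.up (𝟙 m)) := by
    apply pair_ext
    · rw [map_fst_app, he0, fst_pairEquiv_symm, fst_pairEquiv_symm]
    · rw [map_snd_app, he0, snd_pairEquiv_symm, snd_pairEquiv_symm]
      rfl
  have hcond := types_congr_hom (NatTrans.congr_app (coequalizer.condition (alphan n X) (betan n X))
    (op m)) ((Sigma.ι (famAT n X) ⟨⟨(m, k.1), g⟩, ⟨hm, k.2⟩⟩).app (op m) e0)
  simp only [capp] at hcond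
  erw [capp, alphan_app_ι, capp (betan n X), betan_app_ι] at hcond
  dsimp only at hcond
  rw [hmapα, hmapβ] at hcond
  exact hcond.trans rfl

lemma sigmaT_rReT (hm : m.len ≤ n) (e : (ReT n X).obj (op m)) :
    sigmaT n X m hm (rReT n X m e) = e := by
  obtain ⟨b, rfl⟩ := πT_surj n X m e
  obtain ⟨k, c, rfl⟩ := BT_surj n X m b
  erw [rReT_π, rBT_ι, ← keyT]

end Truncated

section Compat

variable (n : ℕ) (X : CategoryTheory.SimplicialObject SSet.{0}) (m : SimplexCategory)

lemma reTToRe_app_π (z : (Bn n X).obj (op m)) :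
    (reTToRe n X).app (op m) ((coequalizer.π (alphan n X) (betan n X)).app (op m) z) =
      (coequalizer.π (alpha X) (beta X)).app (op m)
        ((Sigma.desc fun k : ObjT n => Sigma.ι (famB X) k.1).app (op m) z) := by
  have h0 : coequalizer.π (alphan n X) (betan n X) ≫ reTToRe n X =
      (Sigma.desc fun k : ObjT n => Sigma.ι (famB X) k.1) ≫
        coequalizer.π (alpha X) (beta X) :=
    coequalizer.π_desc _ _
  have := types_congr_hom (NatTrans.congr_app h0 (op m)) z
  exact this

lemma desc_ι_app (k : ObjT n) (c : (famBT n X k).obj (op m)) :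
    ((Sigma.desc fun k : ObjT n => Sigma.ι (famB X) k.1).app (op m))
      ((Sigma.ι (famBT n X) k).app (op m) c) = (Sigma.ι (famB X) k.1).app (op m) c := by
  have h0 : Sigma.ι (famBT n X) k ≫ (Sigma.desc fun k : ObjT n => Sigma.ι (famB X) k.1) =
      Sigma.ι (famB X) k.1 := by simp
  have := types_congr_hom (NatTrans.congr_app h0 (op m)) c
  exact this

lemma rRe_reTToRe (e : (ReT n X).obj (op m)) :
    rRe X m ((reTToRe n X).app (op m) e) = rReT n X m e := by
  obtain ⟨b, rfl⟩ := πT_surj n X m e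
  obtain ⟨k, c, rfl⟩ := BT_surj n X m b
  erw [rReT_π, rBT_ι, reTToRe_app_π, desc_ι_app, rRe_π, rB_ι]

lemma reTToRe_sigmaT (hm : m.len ≤ n) (d : (X.obj (op m)).obj (op m)) :
    (reTToRe n X).app (op m) (sigmaT n X m hm d) = sigmaR X m d := by
  unfold sigmaT sigmaR
  erw [reTToRe_app_π, desc_ι_app]

lemma reTToRe_app_bijective (hm : m.len ≤ n) :
    Function.Bijective ((reTToRe n X).app (op m)) := by
  constructor
  · intro e e' h
    have h2 := congrArg (rRe X m) h
    rw [rRe_reTToRe, rRe_reTToRe] at h2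
    rw [← sigmaT_rReT n X m hm e, ← sigmaT_rReT n X m hm e', h2]
  · intro y
    refine ⟨sigmaT n X m hm (rRe X m y), ?_⟩
    rw [reTToRe_sigmaT]
    exact sigmaR_rRe X m y

end Compat

end RealizationAux

open RealizationAux CategoryTheory.SimplicialObject in
/-- For a bisimplicial set `X`, the natural map
`sk_n (Re_n X) ⟶ sk_n (Re X)` from the `n`-skeleton of the `n`-truncated
realization to the `n`-skeleton of the realization is an isomorphism. -/
theorem sk_reT_to_sk_re_isIso (n : ℕ) (X : CategoryTheory.SimplicialObject SSet.{0}) :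
    IsIso ((SimplicialObject.sk (C := Type 0) n).map (reTToRe n X)) := by
  have h : ∀ a : (SimplexCategory.Truncated n)ᵒᵖ,
      IsIso (((SimplicialObject.truncation (C := Type 0) n).map (reTToRe n X)).app a) := by
    intro a
    have hb : IsIso ((reTToRe n X).app (op a.unop.obj)) := by
      rw [isIso_iff_bijective]
      exact reTToRe_app_bijective n X a.unop.obj a.unop.property
    exact hb
  have h2 : IsIso ((SimplicialObject.truncation (C := Type 0) n).map (reTToRe n X)) :=
    @NatIso.isIso_of_isIso_app _ _ _ _ _ _ _ h
  change IsIso ((SimplicialObject.Truncated.sk (C := Type 0) n).map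
    ((SimplicialObject.truncation (C := Type 0) n).map (reTToRe n X)))
  infer_instance
end

section
/- If a simplicial object X in a category C is split (each X_n decomposes as the coproduct of the n-th latching object L_n X and a complement N X_n, with the canonical map L_n X → X_n the coproduct inclusion), then the degenerate part is determined: X_m is isomorphic to the coproduct over surjections σ : [m] ↠ [k], k ≤ m, of N X_k. -/
open CategoryTheory CategoryTheory.Limits Opposite

namespace SplitAux

variable {C : Type*} [Category C]

/-- The latching category at `[n]`: proper (non-invertible) order-preserving
surjections out of `[n]`, i.e. epimorphisms `[n] ↠ [k]` with `k < n`. -/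
def LatchingCat (n : SimplexCategory) : Type :=
  ObjectProperty.FullSubcategory (fun f : Under n => Epi f.hom ∧ ¬ IsIso f.hom)

instance (n : SimplexCategory) : Category (LatchingCat n) :=
  ObjectProperty.FullSubcategory.category _

/-- The diagram of a simplicial object `X` over the latching category,
whose colimit is the latching object `L_n X`. -/
def latchingDiagram (X : CategoryTheory.SimplicialObject C) (n : SimplexCategory) :
    (LatchingCat n)ᵒᵖ ⥤ C :=
  (ObjectProperty.ι _ ⋙ Under.forget n).op ⋙ X

/-- The `n`-th latching object of a simplicial object. -/
noncomputable def latchingObject [HasColimitsOfSize.{0, 0} C]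
    (X : CategoryTheory.SimplicialObject C) (n : SimplexCategory) : C :=
  colimit (latchingDiagram X n)

/-- The canonical map `L_n X ⟶ X_n`, with components the degeneracy maps. -/
noncomputable def latchingMap [HasColimitsOfSize.{0, 0} C]
    (X : CategoryTheory.SimplicialObject C) (n : SimplexCategory) :
    latchingObject X n ⟶ X.obj (op n) :=
  colimit.desc (latchingDiagram X n)
    { pt := X.obj (op n)
      ι :=
        { app := fun σ => X.map σ.unop.1.hom.op
          naturality := fun σ τ e => by
            dsimp [latchingDiagram]
            erw [← X.map_comp, ← op_comp, Under.w, Category.comp_id]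
            rfl } }

end SplitAux

namespace SplitProof
open SplitAux

variable {C : Type*} [Category C] [HasColimitsOfSize.{0, 0} C]
variable (X : CategoryTheory.SimplicialObject C) (N : SimplexCategory → C)
variable (e : ∀ n : SimplexCategory, latchingObject X n ⨿ N n ≅ X.obj (op n))

/-- The index type: all epis out of `m`. -/
abbrev Idx (m : SimplexCategory) := Σ k : SimplexCategory, {f : m ⟶ k // Epi f}

/-- The inclusion of the nondegenerate part. -/
noncomputable def incl (k : SimplexCategory) : N k ⟶ X.obj (op k) :=
  coprod.inr ≫ (e k).hom

/-- The comparison map. -/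
noncomputable def Φ (m : SimplexCategory) : (∐ fun σ : Idx m => N σ.1) ⟶ X.obj (op m) :=
  Sigma.desc fun σ => incl X N e σ.1 ≫ X.map σ.2.1.op

lemma len_lt_of_not_isIso {m k : SimplexCategory} (f : m ⟶ k) (hf : Epi f)
    (hni : ¬ IsIso f) : k.len < m.len := by
  rcases lt_or_eq_of_le (@SimplexCategory.len_le_of_epi _ _ f hf) with h | h
  · exact h
  · refine absurd (SimplexCategory.isIso_of_bijective ?_) hni
    rw [Fintype.bijective_iff_surjective_and_card]
    exact ⟨SimplexCategory.epi_iff_surjective.1 hf, by simp [h]⟩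

lemma eq_of_isIso {m k : SimplexCategory} (f : m ⟶ k) (h : IsIso f) : k = m :=
  (SimplexCategory.skeletal ⟨asIso f⟩).symm

/-- The reindexing map sending the summand `τ : k ↠ j` to the summand `σ ≫ τ : m ↠ j`. -/
noncomputable def reidx {m k : SimplexCategory} (σ : m ⟶ k) (hσ : Epi σ) :
    (∐ fun τ : Idx k => N τ.1) ⟶ (∐ fun ρ : Idx m => N ρ.1) :=
  Sigma.desc fun τ =>
    haveI := hσ; haveI := τ.2.2
    Sigma.ι (fun ρ : Idx m => N ρ.1) ⟨τ.1, σ ≫ τ.2.1, inferInstance⟩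

lemma reidx_comp_Φ {m k : SimplexCategory} (σ : m ⟶ k) (hσ : Epi σ) :
    reidx N σ hσ ≫ Φ X N e m = Φ X N e k ≫ X.map σ.op := by
  ext τ
  simp [reidx, Φ, incl, op_comp, X.map_comp]

lemma iota_congr {m k : SimplexCategory} {f g : m ⟶ k} (hf : Epi f) (hg : Epi g)
    (h : f = g) :
    Sigma.ι (fun ρ : Idx m => N ρ.1) ⟨k, f, hf⟩ = Sigma.ι (fun ρ : Idx m => N ρ.1) ⟨k, g, hg⟩ := by
  subst h; rfl

lemma reidx_reidx {m k j : SimplexCategory} (σ : m ⟶ k) (hσ : Epi σ)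
    (u : k ⟶ j) (hu : Epi u) (v : m ⟶ j) (hv : Epi v) (hcomp : σ ≫ u = v) :
    reidx N u hu ≫ reidx N σ hσ = reidx N v hv := by
  ext τ
  simp only [reidx, colimit.ι_desc_assoc, colimit.ι_desc, Cofan.mk_pt, Cofan.mk_ι_app]
  refine iota_congr N _ _ ?_
  rw [← hcomp, Category.assoc]

/-- The cocone over the latching diagram with point the coproduct over all epis. -/
noncomputable def myCocone (m : SimplexCategory)
    (hIH : ∀ k : SimplexCategory, k.len < m.len → IsIso (Φ X N e k)) :
    Cocone (latchingDiagram X m) where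
  pt := ∐ fun σ : Idx m => N σ.1
  ι :=
    { app := fun σ =>
        haveI := hIH σ.unop.1.right
          (len_lt_of_not_isIso σ.unop.1.hom σ.unop.2.1 σ.unop.2.2)
        inv (I := hIH σ.unop.1.right
          (len_lt_of_not_isIso σ.unop.1.hom σ.unop.2.1 σ.unop.2.2)) (Φ X N e σ.unop.1.right) ≫
          reidx N σ.unop.1.hom σ.unop.2.1
      naturality := by
        rintro ⟨a⟩ ⟨b⟩ ⟨g⟩
        haveI ha := hIH a.1.right (len_lt_of_not_isIso a.1.hom a.2.1 a.2.2)
        haveI hb := hIH b.1.right (len_lt_of_not_isIso b.1.hom b.2.1 b.2.2)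
        haveI := b.2.1
        haveI := a.2.1
        have hw : b.1.hom ≫ g.hom.right = a.1.hom := Under.w g.hom
        haveI hgepi : Epi g.hom.right := by
          haveI : Epi (b.1.hom ≫ g.hom.right) := by rw [hw]; exact a.2.1
          exact epi_of_epi b.1.hom g.hom.right
        dsimp [latchingDiagram]
        rw [Category.comp_id]
        have h2 : X.map g.hom.right.op ≫ inv (Φ X N e b.1.right) =
            inv (Φ X N e a.1.right) ≫ reidx N g.hom.right hgepi := by
          rw [IsIso.comp_inv_eq, Category.assoc, reidx_comp_Φ, IsIso.inv_hom_id_assoc]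
        rw [← Category.assoc]; erw [h2, Category.assoc,
          reidx_reidx N b.1.hom b.2.1 g.hom.right hgepi a.1.hom a.2.1 hw]
        rfl
      }

noncomputable def ψ (m : SimplexCategory)
    (hIH : ∀ k : SimplexCategory, k.len < m.len → IsIso (Φ X N e k)) :
    latchingObject X m ⟶ ∐ fun σ : Idx m => N σ.1 :=
  colimit.desc _ (myCocone X N e m hIH)

lemma ψ_comp_Φ (m : SimplexCategory)
    (hIH : ∀ k : SimplexCategory, k.len < m.len → IsIso (Φ X N e k)) :
    ψ X N e m hIH ≫ Φ X N e m = latchingMap X m := by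
  apply colimit.hom_ext
  intro σ
  haveI := hIH σ.unop.1.right
    (len_lt_of_not_isIso σ.unop.1.hom σ.unop.2.1 σ.unop.2.2)
  erw [ψ, colimit.ι_desc_assoc, latchingMap, colimit.ι_desc]
  show (inv (Φ X N e σ.unop.1.right) ≫ reidx N σ.unop.1.hom σ.unop.2.1) ≫ Φ X N e m =
    X.map σ.unop.1.hom.op
  rw [Category.assoc, IsIso.inv_comp_eq]
  exact (reidx_comp_Φ X N e σ.unop.1.hom σ.unop.2.1).trans rfl

lemma ι_id_comp_Φ (k : SimplexCategory) :
    Sigma.ι (fun σ : Idx k => N σ.1) ⟨k, 𝟙 k, inferInstance⟩ ≫ Φ X N e k = incl X N e k := by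
  simp [Φ]

lemma isIso_Φ (he : ∀ n : SimplexCategory, coprod.inl ≫ (e n).hom = latchingMap X n) :
    ∀ n : ℕ, ∀ m : SimplexCategory, m.len < n → IsIso (Φ X N e m) := by
  intro n
  induction n with
  | zero => exact fun m hm => absurd hm (by omega)
  | succ n ih =>
    intro m hm
    have hIH : ∀ k : SimplexCategory, k.len < m.len → IsIso (Φ X N e k) :=
      fun k hk => ih k (by omega)
    refine ⟨(e m).inv ≫ coprod.desc (ψ X N e m hIH)
      (Sigma.ι (fun σ : Idx m => N σ.1) ⟨m, 𝟙 m, inferInstance⟩), ?_, ?_⟩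
    · -- Φ ≫ Φinv = 𝟙
      apply colimit.hom_ext
      rintro ⟨⟨k, f, hf⟩⟩
      rw [Category.comp_id]
      show Sigma.ι (fun σ : Idx m => N σ.1) ⟨k, f, hf⟩ ≫ _ = _
      rw [← Category.assoc, Φ, colimit.ι_desc]
      show (incl X N e k ≫ X.map f.op) ≫ _ = _
      by_cases hiso : IsIso f
      · obtain rfl : k = m := eq_of_isIso f hiso
        haveI := hiso
        obtain rfl : f = 𝟙 _ := SimplexCategory.eq_id_of_isIso f
        rw [op_id, X.map_id, Category.comp_id, incl, Category.assoc,
          Iso.hom_inv_id_assoc, coprod.inr_desc]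
      · let A : LatchingCat m := ⟨Under.mk f, hf, hiso⟩
        haveI := hIH k (len_lt_of_not_isIso f hf hiso)
        have hcol : X.map f.op = colimit.ι (latchingDiagram X m) (op A) ≫ latchingMap X m := by
          rw [latchingMap, colimit.ι_desc]
          rfl
        have hlm : latchingMap X m ≫ (e m).inv = coprod.inl := by
          rw [← he m, Category.assoc, Iso.hom_inv_id, Category.comp_id]
        have key : X.map f.op ≫ (e m).inv ≫ coprod.desc (ψ X N e m hIH)
            (Sigma.ι (fun σ : Idx m => N σ.1) ⟨m, 𝟙 m, inferInstance⟩) =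
            inv (Φ X N e k) ≫ reidx N f hf := by
          rw [hcol]
          erw [Category.assoc, reassoc_of% hlm, coprod.inl_desc, ψ, colimit.ι_desc]
          rfl
        rw [Category.assoc, key]
        show incl X N e k ≫ (inv (Φ X N e k) ≫ reidx N f hf) = _
        rw [← ι_id_comp_Φ X N e k, Category.assoc, IsIso.hom_inv_id_assoc, reidx,
          colimit.ι_desc]
        exact iota_congr N _ _ (Category.comp_id f)
    · -- Φinv ≫ Φ = 𝟙
      rw [Category.assoc, Iso.inv_comp_eq, Category.comp_id]
      apply coprod.hom_ext
      · rw [coprod.inl_desc_assoc, ψ_comp_Φ, he]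
      · rw [coprod.inr_desc_assoc, ι_id_comp_Φ, incl]

end SplitProof

open SplitAux in
/-- If a simplicial object `X` in a cocomplete category `C` is split
(i.e. each `X_n` is the coproduct of the latching object `L_n X` and a complement
`N_n`, the canonical map `L_n X ⟶ X_n` being the coproduct inclusion), then for
every `m`, `X_m` is the coproduct, over all order-preserving surjections
`σ : [m] ↠ [k]` (including the identity), of `N_k`. -/
theorem split_simplicialObject_decomposition {C : Type*} [Category C]
    [HasColimitsOfSize.{0, 0} C] (X : CategoryTheory.SimplicialObject C)
    (N : SimplexCategory → C)
    (e : ∀ n : SimplexCategory, latchingObject X n ⨿ N n ≅ X.obj (op n))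
    (he : ∀ n : SimplexCategory, coprod.inl ≫ (e n).hom = latchingMap X n) :
    ∀ m : SimplexCategory,
      Nonempty (X.obj (op m) ≅
        ∐ fun σ : Σ k : SimplexCategory, {f : m ⟶ k // Epi f} => N σ.1) := by
  intro m
  haveI := SplitProof.isIso_Φ X N e he (m.len + 1) m (Nat.lt_succ_self _)
  exact ⟨(asIso (SplitProof.Φ X N e m)).symm⟩
end
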